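/- Let n ≥ 1 and m ≥ 1, and let 𝒟_g denote the family of first-order operators consisting of ∂̸_i = ∂_i + (x^i/r)∂_t (i=1,…,n) and ((t−r)/r)∂_α (α=0,…,n), where r = |x|. There exists a constant C = C(n,m) > 0 such that for every D ∈ 𝒟_g, every finite sequence I of indices in {1,…,n} with |I| = m, every smooth function u defined on an open subset of ℝ^{1+n}, and every point (t,x) of the domain satisfying t/2 ≤ r ≤ t − 1: |H^I D u| ≤ |D H^I u| + C Σ_{Y ∈ 𝒟_g} Σ_{|J| < m} |Y H^J u|, where the inner sum runs over all finite sequences J of indices in {1,…,n} of length strictly less than m. -/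

import Mathlib

/-!
Write `ω_i = x^i/r` (`angular i`) and `τ = (t-r)/r` (`weight`). Away from the axis `r = 0` the
commutator of a boost with a good derivative is again a combination of good derivatives,
`[H_j, ∂̸_i] = -ω_i ∂̸_j + (δ_ij - ω_i ω_j) τ ∂_t` and
`[H_j, τ ∂_α] = -ω_j (τ + 2) τ ∂_α - δ_α0 τ ∂_j - δ_αj τ ∂_t`,
with coefficients polynomial in the `ω_i` and `τ`. These polynomials form an algebra which the
boosts preserve (`H_j ω_i = (τ + 1)(δ_ij - ω_i ω_j)`, `H_j τ = -ω_j τ (τ + 2)`) and which is bounded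
on `t/2 ≤ r ≤ t - 1`, where `|ω_i| ≤ 1` and `0 < τ ≤ 1`. Moving the boosts of `H^I` past `D` one at
a time therefore writes `H^I D u - D H^I u` as a finite sum of terms `c · Y H^J u` with `Y ∈ 𝒟_g`,
`|J| < |I|` and `c` in that algebra; this sum depends only on `(D, I)`, of which there are finitely
many.
-/

open MeasureTheory

noncomputable section

variable {n : ℕ}

/-- The partial derivative `∂_α` on `ℝ^{1+n}`; index `0` is the time variable `t`. -/
def pd (α : Fin (n + 1)) (u : (Fin (n + 1) → ℝ) → ℝ) : (Fin (n + 1) → ℝ) → ℝ :=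
  fun p => fderiv ℝ u p (Pi.single α 1)

/-- The Euclidean length `r = |x|` of the spatial part of a point of `ℝ^{1+n}`. -/
def rad (p : Fin (n + 1) → ℝ) : ℝ := Real.sqrt (∑ i : Fin n, p i.succ ^ 2)

/-- The Lorentz boost `H_j = t ∂_j + x^j ∂_t`. -/
def Lb (j : Fin n) (u : (Fin (n + 1) → ℝ) → ℝ) : (Fin (n + 1) → ℝ) → ℝ :=
  fun p => p 0 * pd j.succ u p + p j.succ * pd 0 u p

/-- The iterated boost `H^I = H_{i₁} ∘ ⋯ ∘ H_{i_m}` for a finite sequence `I`. -/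
def HI : List (Fin n) → ((Fin (n + 1) → ℝ) → ℝ) → ((Fin (n + 1) → ℝ) → ℝ)
  | [], u => u
  | j :: I, u => Lb j (HI I u)

/-- The point `(√(T²+|x|²), x)` of the hyperboloid `H_T` over `x ∈ ℝⁿ`. -/
def hyp (T : ℝ) (x : Fin n → ℝ) : Fin (n + 1) → ℝ :=
  Fin.cons (Real.sqrt (T ^ 2 + ∑ i, x i ^ 2)) x
/-- The family `𝒟_g` of "good" first-order operators: the light-cone-tangential
derivatives `∂̸_i = ∂_i + (x^i/r)∂_t` (indexed by `Sum.inl i`) and the operators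
`((t-r)/r)∂_α` (indexed by `Sum.inr α`). -/
def Dg (d : Fin n ⊕ Fin (n + 1)) (u : (Fin (n + 1) → ℝ) → ℝ) :
    (Fin (n + 1) → ℝ) → ℝ :=
  fun p =>
    match d with
    | Sum.inl i => pd i.succ u p + (p i.succ / rad p) * pd 0 u p
    | Sum.inr α => ((p 0 - rad p) / rad p) * pd α u p

open scoped ContDiff Topology
open Filter Finset

/-- The vector field `t e_j + x^j e_0` along which `H_j` differentiates. -/
def boostVector (j : Fin n) : (Fin (n + 1) → ℝ) →L[ℝ] Fin (n + 1) → ℝ :=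
  (ContinuousLinearMap.proj 0).smulRight (Pi.single j.succ 1) +
    (ContinuousLinearMap.proj j.succ).smulRight (Pi.single 0 1)

section Calculus

variable {j : Fin n} {f g u : (Fin (n + 1) → ℝ) → ℝ} {p : Fin (n + 1) → ℝ}

theorem Lb_eq_fderiv (j : Fin n) (f : (Fin (n + 1) → ℝ) → ℝ) (p : Fin (n + 1) → ℝ) :
    Lb j f p = fderiv ℝ f p (boostVector j p) := by
  simp [Lb, pd, boostVector]

theorem HasFDerivAt.Lb_eq {f' : (Fin (n + 1) → ℝ) →L[ℝ] ℝ} (h : HasFDerivAt f f' p) :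
    Lb j f p = f' (boostVector j p) := by
  rw [Lb_eq_fderiv, h.fderiv]

theorem Lb_congr (h : f =ᶠ[𝓝 p] g) : Lb j f p = Lb j g p := by
  rw [Lb_eq_fderiv, Lb_eq_fderiv, h.fderiv_eq]

theorem Lb_const (c : ℝ) : Lb j (fun _ => c) p = 0 := by
  simp [Lb_eq_fderiv]

theorem Lb_add (hf : DifferentiableAt ℝ f p) (hg : DifferentiableAt ℝ g p) :
    Lb j (fun q => f q + g q) p = Lb j f p + Lb j g p := by
  rw [(hf.hasFDerivAt.fun_add hg.hasFDerivAt).Lb_eq, Lb_eq_fderiv, Lb_eq_fderiv]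
  rfl

theorem Lb_sub (hf : DifferentiableAt ℝ f p) (hg : DifferentiableAt ℝ g p) :
    Lb j (fun q => f q - g q) p = Lb j f p - Lb j g p := by
  rw [(hf.hasFDerivAt.fun_sub hg.hasFDerivAt).Lb_eq, Lb_eq_fderiv, Lb_eq_fderiv]
  rfl

theorem Lb_mul (hf : DifferentiableAt ℝ f p) (hg : DifferentiableAt ℝ g p) :
    Lb j (fun q => f q * g q) p = Lb j f p * g p + f p * Lb j g p := by
  rw [(hf.hasFDerivAt.fun_mul hg.hasFDerivAt).Lb_eq, Lb_eq_fderiv, Lb_eq_fderiv]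
  simp only [add_apply, smul_apply, smul_eq_mul]
  ring

theorem Lb_div (hf : DifferentiableAt ℝ f p) (hg : DifferentiableAt ℝ g p) (hg₀ : g p ≠ 0) :
    Lb j (fun q => f q / g q) p = (Lb j f p * g p - f p * Lb j g p) / g p ^ 2 := by
  have hinv : HasFDerivAt (fun q => (g q)⁻¹) (-(g p ^ 2)⁻¹ • fderiv ℝ g p) p :=
    (hasDerivAt_inv hg₀).comp_hasFDerivAt p hg.hasFDerivAt
  simp only [div_eq_mul_inv]
  rw [(hf.hasFDerivAt.fun_mul hinv).Lb_eq, Lb_eq_fderiv, Lb_eq_fderiv]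
  simp only [add_apply, smul_apply, smul_eq_mul]
  field_simp
  ring

theorem ContDiffAt.pd (hu : ContDiffAt ℝ ∞ u p) (α : Fin (n + 1)) :
    ContDiffAt ℝ ∞ (pd α u) p :=
  (hu.fderiv_right (m := ∞) (by simp)).clm_apply contDiffAt_const

theorem differentiableAt_pd (hu : ContDiffAt ℝ ∞ u p) (α : Fin (n + 1)) :
    DifferentiableAt ℝ (pd α u) p :=
  (hu.pd α).differentiableAt (by simp)

theorem ContDiffAt.Lb (hu : ContDiffAt ℝ ∞ u p) (j : Fin n) : ContDiffAt ℝ ∞ (Lb j u) p :=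
  ((contDiffAt_apply ℝ ℝ 0 p).mul (hu.pd j.succ)).add
    ((contDiffAt_apply ℝ ℝ j.succ p).mul (hu.pd 0))

theorem ContDiffAt.HI (hu : ContDiffAt ℝ ∞ u p) :
    ∀ I : List (Fin n), ContDiffAt ℝ ∞ (HI I u) p
  | [] => hu
  | j :: I => (hu.HI I).Lb j

/-- The commutator `[∂_α, H_j] = δ_α0 ∂_j + δ_αj ∂_t` comes from differentiating the (linear)
coefficients of `H_j`; the second derivatives cancel by the symmetry of `D²u`. -/
theorem pd_Lb (hu : ContDiffAt ℝ ∞ u p) (α : Fin (n + 1)) :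
    pd α (Lb j u) p = Lb j (pd α u) p + (Pi.single α 1 : Fin (n + 1) → ℝ) 0 * pd j.succ u p
      + (Pi.single α 1 : Fin (n + 1) → ℝ) j.succ * pd 0 u p := by
  have hsymm : IsSymmSndFDerivAt ℝ u p :=
    hu.isSymmSndFDerivAt (by rw [minSmoothness_of_isRCLikeNormedField]; norm_cast)
  have hu' : DifferentiableAt ℝ (fderiv ℝ u) p :=
    (hu.fderiv_right (m := 1) (by norm_cast)).differentiableAt one_ne_zero
  have hLb : Lb j u = fun q => fderiv ℝ u q (boostVector j q) := funext (Lb_eq_fderiv j u)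
  rw [Lb_eq_fderiv, show pd α u = fun q => fderiv ℝ u q (Pi.single α 1) from rfl, pd, hLb,
    fderiv_clm_apply hu' (boostVector j).differentiableAt,
    fderiv_clm_apply hu' (differentiableAt_const _)]
  simp only [(boostVector j).fderiv, add_apply, ContinuousLinearMap.comp_apply,
    ContinuousLinearMap.flip_apply, fderiv_fun_const, Pi.zero_apply,
    ContinuousLinearMap.comp_zero, zero_add, hsymm (boostVector j p)]
  simp only [boostVector, pd, add_apply, ContinuousLinearMap.smulRight_apply,
    ContinuousLinearMap.proj_apply, map_add, map_smul, smul_eq_mul]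
  ring

theorem pd_zero_Lb (hu : ContDiffAt ℝ ∞ u p) :
    pd 0 (Lb j u) p = Lb j (pd 0 u) p + pd j.succ u p := by
  simp [pd_Lb hu]

theorem pd_succ_Lb (hu : ContDiffAt ℝ ∞ u p) (i : Fin n) :
    pd i.succ (Lb j u) p = Lb j (pd i.succ u) p + if i = j then pd 0 u p else 0 := by
  simp [pd_Lb hu, Pi.single_apply, eq_comm]

end Calculus

section Geometry

variable {j : Fin n} {p : Fin (n + 1) → ℝ}

theorem continuous_rad : Continuous (rad (n := n)) := by
  unfold rad
  fun_prop

theorem rad_nonneg (p : Fin (n + 1) → ℝ) : 0 ≤ rad p := Real.sqrt_nonneg _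

theorem abs_le_rad (p : Fin (n + 1) → ℝ) (i : Fin n) : |p i.succ| ≤ rad p := by
  rw [← Real.sqrt_sq_eq_abs]
  exact Real.sqrt_le_sqrt (single_le_sum (f := fun k => p k.succ ^ 2)
    (fun k _ => sq_nonneg _) (mem_univ i))

theorem sum_sq_ne_zero_of_rad_ne_zero (hr : rad p ≠ 0) : ∑ k : Fin n, p k.succ ^ 2 ≠ 0 :=
  fun h => hr (by simp [rad, h])

theorem differentiableAt_rad (hr : rad p ≠ 0) : DifferentiableAt ℝ rad p :=
  (DifferentiableAt.fun_sum fun k _ => (differentiableAt_apply k.succ p).pow 2).sqrt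
    (sum_sq_ne_zero_of_rad_ne_zero hr)

theorem Lb_rad (hr : rad p ≠ 0) : Lb j rad p = p 0 * p j.succ / rad p := by
  have hq := HasFDerivAt.fun_sum (u := univ) fun (k : Fin n) _ =>
    (hasFDerivAt_apply (𝕜 := ℝ) (k.succ : Fin (n + 1)) p).pow 2
  rw [show rad = fun q : Fin (n + 1) → ℝ => √(∑ k : Fin n, q k.succ ^ 2) from rfl,
    (hq.sqrt (sum_sq_ne_zero_of_rad_ne_zero hr)).Lb_eq]
  simp only [one_div, Nat.add_one_sub_one, pow_one, nsmul_eq_mul, Nat.cast_ofNat, boostVector,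
    add_apply, ContinuousLinearMap.smulRight_apply, ContinuousLinearMap.proj_apply, smul_apply,
    _root_.sum_apply, Pi.add_apply, Pi.smul_apply, Pi.single_apply, Fin.succ_inj, smul_eq_mul,
    mul_ite, mul_one, mul_zero, Fin.succ_ne_zero, add_zero, sum_ite_eq', mem_univ, ↓reduceIte]
  ring

theorem Lb_apply_zero : Lb j (fun q => q 0) p = p j.succ := by
  rw [(hasFDerivAt_apply 0 p).Lb_eq]
  simp [boostVector]

theorem Lb_apply_succ (i : Fin n) :
    Lb j (fun q => q i.succ) p = if i = j then p 0 else 0 := by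
  rw [(hasFDerivAt_apply i.succ p).Lb_eq]
  simp [boostVector, Pi.single_apply, eq_comm]

def angular (i : Fin n) (p : Fin (n + 1) → ℝ) : ℝ := p i.succ / rad p

def weight (p : Fin (n + 1) → ℝ) : ℝ := (p 0 - rad p) / rad p

theorem Lb_angular (hr : rad p ≠ 0) (i : Fin n) :
    Lb j (angular i) p
      = (weight p + 1) * ((if i = j then 1 else 0) - angular i p * angular j p) := by
  rw [show angular i = fun q => q i.succ / rad q from rfl,
    Lb_div (differentiableAt_apply _ p) (differentiableAt_rad hr) hr, Lb_apply_succ, Lb_rad hr]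
  simp only [angular, weight]
  split_ifs <;> field_simp <;> ring

theorem Lb_weight (hr : rad p ≠ 0) :
    Lb j weight p = -(angular j p * weight p * (weight p + 2)) := by
  have hnum := (differentiableAt_apply (𝕜 := ℝ) 0 p).fun_sub (differentiableAt_rad hr)
  rw [show weight = fun q : Fin (n + 1) → ℝ => (q 0 - rad q) / rad q from rfl,
    Lb_div hnum (differentiableAt_rad hr) hr,
    Lb_sub (differentiableAt_apply _ p) (differentiableAt_rad hr), Lb_apply_zero, Lb_rad hr]
  simp only [angular]
  field_simp
  ring

end Geometry

def coneRegion : Set (Fin (n + 1) → ℝ) := {p | p 0 / 2 ≤ rad p ∧ rad p ≤ p 0 - 1}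

theorem rad_pos_of_mem_coneRegion {p : Fin (n + 1) → ℝ} (hp : p ∈ coneRegion) : 0 < rad p := by
  obtain ⟨h₁, h₂⟩ := hp
  linarith

theorem abs_angular_le_one (i : Fin n) (p : Fin (n + 1) → ℝ) : |angular i p| ≤ 1 := by
  rw [angular, abs_div, abs_of_nonneg (rad_nonneg p)]
  exact div_le_one_of_le₀ (abs_le_rad p i) (rad_nonneg p)

theorem abs_weight_le_one {p : Fin (n + 1) → ℝ} (hp : p ∈ coneRegion) : |weight p| ≤ 1 := by
  have hr := rad_pos_of_mem_coneRegion hp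
  obtain ⟨h₁, h₂⟩ := hp
  rw [weight, abs_div, abs_of_pos (by linarith), abs_of_pos hr, div_le_one hr]
  linarith

def coeffAlgebra : Subalgebra ℝ ((Fin (n + 1) → ℝ) → ℝ) :=
  Algebra.adjoin ℝ (insert weight (Set.range angular))

section CoeffAlgebra

variable {c : (Fin (n + 1) → ℝ) → ℝ}

theorem angular_mem_coeffAlgebra (i : Fin n) : angular i ∈ coeffAlgebra (n := n) :=
  Algebra.subset_adjoin (Set.mem_insert_of_mem _ ⟨i, rfl⟩)

theorem weight_mem_coeffAlgebra : weight ∈ coeffAlgebra (n := n) :=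
  Algebra.subset_adjoin (Set.mem_insert _ _)

theorem const_mem_coeffAlgebra (a : ℝ) : (fun _ => a) ∈ coeffAlgebra (n := n) :=
  coeffAlgebra.algebraMap_mem a

theorem differentiableAt_of_mem_coeffAlgebra (hc : c ∈ coeffAlgebra) {p : Fin (n + 1) → ℝ}
    (hr : rad p ≠ 0) : DifferentiableAt ℝ c p := by
  induction hc using Algebra.adjoin_induction with
  | mem c hc =>
    have := differentiableAt_rad hr
    obtain rfl | ⟨i, rfl⟩ := hc
    · unfold weight
      fun_prop (disch := assumption)
    · unfold angular
      fun_prop (disch := assumption)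
  | algebraMap a => exact differentiableAt_const a
  | add a b _ _ ha hb => exact ha.add hb
  | mul a b _ _ ha hb => exact ha.mul hb

theorem exists_abs_le_of_mem_coeffAlgebra (hc : c ∈ coeffAlgebra) :
    ∃ B, ∀ p ∈ coneRegion, |c p| ≤ B := by
  induction hc using Algebra.adjoin_induction with
  | mem c hc =>
    obtain rfl | ⟨i, rfl⟩ := hc
    · exact ⟨1, fun p hp => abs_weight_le_one hp⟩
    · exact ⟨1, fun p _ => abs_angular_le_one i p⟩
  | algebraMap a => exact ⟨|a|, fun p _ => le_rfl⟩
  | add a b _ _ ha hb =>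
    obtain ⟨A, hA⟩ := ha
    obtain ⟨B, hB⟩ := hb
    exact ⟨A + B, fun p hp => (abs_add_le _ _).trans (add_le_add (hA p hp) (hB p hp))⟩
  | mul a b _ _ ha hb =>
    obtain ⟨A, hA⟩ := ha
    obtain ⟨B, hB⟩ := hb
    refine ⟨A * B, fun p hp => ?_⟩
    rw [Pi.mul_apply, abs_mul]
    exact mul_le_mul (hA p hp) (hB p hp) (abs_nonneg _) ((abs_nonneg _).trans (hA p hp))

theorem exists_Lb_eq_of_mem_coeffAlgebra (hc : c ∈ coeffAlgebra) (j : Fin n) :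
    ∃ c' ∈ coeffAlgebra, ∀ p, rad p ≠ 0 → Lb j c p = c' p := by
  induction hc using Algebra.adjoin_induction with
  | mem c hc =>
    obtain rfl | ⟨i, rfl⟩ := hc
    · exact ⟨-(angular j * weight * (weight + fun _ => 2)),
        neg_mem (mul_mem (mul_mem (angular_mem_coeffAlgebra j) weight_mem_coeffAlgebra)
          (add_mem weight_mem_coeffAlgebra (const_mem_coeffAlgebra 2))),
        fun p hr => Lb_weight hr⟩
    · exact ⟨(weight + fun _ => 1) * ((fun _ => if i = j then 1 else 0) - angular i * angular j),
        mul_mem (add_mem weight_mem_coeffAlgebra (const_mem_coeffAlgebra 1))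
          (sub_mem (const_mem_coeffAlgebra _)
            (mul_mem (angular_mem_coeffAlgebra i) (angular_mem_coeffAlgebra j))),
        fun p hr => Lb_angular hr i⟩
  | algebraMap a => exact ⟨0, zero_mem _, fun p _ => Lb_const a⟩
  | add a b ha hb iha ihb =>
    obtain ⟨a', ha', hEa⟩ := iha
    obtain ⟨b', hb', hEb⟩ := ihb
    refine ⟨a' + b', add_mem ha' hb', fun p hr => ?_⟩
    rw [Pi.add_apply, ← hEa p hr, ← hEb p hr]
    exact Lb_add (differentiableAt_of_mem_coeffAlgebra ha hr)
      (differentiableAt_of_mem_coeffAlgebra hb hr)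
  | mul a b ha hb iha ihb =>
    obtain ⟨a', ha', hEa⟩ := iha
    obtain ⟨b', hb', hEb⟩ := ihb
    refine ⟨a' * b + a * b', add_mem (mul_mem ha' hb) (mul_mem ha hb'), fun p hr => ?_⟩
    rw [Pi.add_apply, Pi.mul_apply, Pi.mul_apply, ← hEa p hr, ← hEb p hr]
    exact Lb_mul (differentiableAt_of_mem_coeffAlgebra ha hr)
      (differentiableAt_of_mem_coeffAlgebra hb hr)

end CoeffAlgebra

section Commutators

variable {w : (Fin (n + 1) → ℝ) → ℝ} {p : Fin (n + 1) → ℝ}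

theorem Dg_inl_apply (i : Fin n) :
    Dg (.inl i) w p = pd i.succ w p + angular i p * pd 0 w p := rfl

theorem Dg_inr_apply (α : Fin (n + 1)) : Dg (.inr α) w p = weight p * pd α w p := rfl

theorem differentiableAt_Dg (hw : ContDiffAt ℝ ∞ w p) (hr : rad p ≠ 0)
    (Y : Fin n ⊕ Fin (n + 1)) : DifferentiableAt ℝ (Dg Y w) p := by
  cases Y with
  | inl i =>
    exact (differentiableAt_pd hw _).add
      ((differentiableAt_of_mem_coeffAlgebra (angular_mem_coeffAlgebra i) hr).mul
        (differentiableAt_pd hw 0))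
  | inr α =>
    exact (differentiableAt_of_mem_coeffAlgebra weight_mem_coeffAlgebra hr).mul
      (differentiableAt_pd hw α)

theorem Lb_Dg_inl (hw : ContDiffAt ℝ ∞ w p) (hr : rad p ≠ 0) (i j : Fin n) :
    Lb j (Dg (.inl i) w) p = Dg (.inl i) (Lb j w) p - angular i p * Dg (.inl j) w p
      + ((if i = j then 1 else 0) - angular i p * angular j p) * Dg (.inr 0) w p := by
  have hang := differentiableAt_of_mem_coeffAlgebra (angular_mem_coeffAlgebra i) hr
  rw [show Dg (.inl i) w = fun q => pd i.succ w q + angular i q * pd 0 w q from rfl,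
    Lb_add (differentiableAt_pd hw _) (hang.fun_mul (differentiableAt_pd hw 0)),
    Lb_mul hang (differentiableAt_pd hw 0), Lb_angular hr]
  simp only [Dg_inl_apply, Dg_inr_apply, pd_zero_Lb hw, pd_succ_Lb hw]
  split_ifs <;> ring

theorem Lb_Dg_inr (hw : ContDiffAt ℝ ∞ w p) (hr : rad p ≠ 0) (j : Fin n) (α : Fin (n + 1)) :
    Lb j (Dg (.inr α) w) p
      = Dg (.inr α) (Lb j w) p - angular j p * (weight p + 2) * Dg (.inr α) w p
        - (Pi.single α 1 : Fin (n + 1) → ℝ) 0 * Dg (.inr j.succ) w p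
        - (Pi.single α 1 : Fin (n + 1) → ℝ) j.succ * Dg (.inr 0) w p := by
  rw [show Dg (.inr α) w = fun q => weight q * pd α w q from rfl,
    Lb_mul (differentiableAt_of_mem_coeffAlgebra weight_mem_coeffAlgebra hr)
      (differentiableAt_pd hw α), Lb_weight hr]
  simp only [Dg_inr_apply, pd_Lb hw]
  ring

end Commutators

theorem HI_append (I J : List (Fin n)) (u : (Fin (n + 1) → ℝ) → ℝ) :
    HI (I ++ J) u = HI I (HI J u) := by
  induction I with
  | nil => rfl
  | cons j I ih => exact congrArg (Lb j) ih

/-- Error terms `u ↦ Σ c · Y H^J u` with `|J| < m`, kept as operators rather than functions so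
that their bounds are uniform in `u`. -/
inductive LowerOrder (m : ℕ) : (((Fin (n + 1) → ℝ) → ℝ) → (Fin (n + 1) → ℝ) → ℝ) → Prop
  | zero : LowerOrder m fun _ _ => 0
  | term {c : (Fin (n + 1) → ℝ) → ℝ} (hc : c ∈ coeffAlgebra) (Y : Fin n ⊕ Fin (n + 1))
      {J : List (Fin n)} (hJ : J.length < m) : LowerOrder m fun u p => c p * Dg Y (HI J u) p
  | add {Φ Ψ} : LowerOrder m Φ → LowerOrder m Ψ → LowerOrder m fun u p => Φ u p + Ψ u p

namespace LowerOrder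

variable {k m : ℕ} {Φ : ((Fin (n + 1) → ℝ) → ℝ) → (Fin (n + 1) → ℝ) → ℝ}

theorem mono (h : LowerOrder k Φ) (hkm : k ≤ m) : LowerOrder m Φ := by
  induction h with
  | zero => exact zero
  | term hc Y hJ => exact term hc Y (hJ.trans_le hkm)
  | add _ _ hΦ hΨ => exact add hΦ hΨ

theorem coeff_mul {c : (Fin (n + 1) → ℝ) → ℝ} (hc : c ∈ coeffAlgebra) (h : LowerOrder m Φ) :
    LowerOrder m fun u p => c p * Φ u p := by
  induction h with
  | zero => simpa using zero
  | @term c' hc' Y J hJ => simpa [mul_assoc] using term (mul_mem hc hc') Y hJ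
  | add _ _ hΦ hΨ => simpa [mul_add] using add hΦ hΨ

theorem comp_HI (h : LowerOrder k Φ) (J : List (Fin n)) :
    LowerOrder (k + J.length) fun u => Φ (HI J u) := by
  induction h with
  | zero => exact zero
  | term hc Y hJ => simpa [HI_append] using term hc Y (J := _ ++ J) (by simpa using hJ)
  | add _ _ hΦ hΨ => exact add hΦ hΨ

theorem differentiableAt (h : LowerOrder m Φ) {u : (Fin (n + 1) → ℝ) → ℝ}
    {p : Fin (n + 1) → ℝ} (hu : ContDiffAt ℝ ∞ u p) (hr : rad p ≠ 0) :
    DifferentiableAt ℝ (Φ u) p := by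
  induction h with
  | zero => exact differentiableAt_const 0
  | term hc Y =>
    exact (differentiableAt_of_mem_coeffAlgebra hc hr).fun_mul (differentiableAt_Dg (hu.HI _) hr Y)
  | add _ _ hΦ hΨ => exact hΦ.fun_add hΨ

end LowerOrder

theorem exists_lowerOrder_Lb_Dg (j : Fin n) (d : Fin n ⊕ Fin (n + 1)) :
    ∃ Φ, LowerOrder 1 Φ ∧ ∀ w p, ContDiffAt ℝ ∞ w p → rad p ≠ 0 →
      Lb j (Dg d w) p = Dg d (Lb j w) p + Φ w p := by
  cases d with
  | inl i =>
    refine ⟨_, .add (.term (neg_mem (angular_mem_coeffAlgebra i)) (.inl j) (J := []) one_pos)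
      (.term (sub_mem (const_mem_coeffAlgebra (if i = j then 1 else 0))
        (mul_mem (angular_mem_coeffAlgebra i) (angular_mem_coeffAlgebra j))) (.inr 0) (J := [])
        one_pos), fun w p hw hr => ?_⟩
    rw [Lb_Dg_inl hw hr]
    simp only [HI, Pi.neg_apply, Pi.sub_apply, Pi.mul_apply]
    ring
  | inr α =>
    refine ⟨_, .add (.add
      (.term (neg_mem (mul_mem (angular_mem_coeffAlgebra j)
        (add_mem weight_mem_coeffAlgebra (const_mem_coeffAlgebra 2)))) (.inr α) (J := []) one_pos)
      (.term (const_mem_coeffAlgebra (-(Pi.single α 1 : Fin (n + 1) → ℝ) 0)) (.inr j.succ)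
        (J := []) one_pos))
      (.term (const_mem_coeffAlgebra (-(Pi.single α 1 : Fin (n + 1) → ℝ) j.succ)) (.inr 0)
        (J := []) one_pos), fun w p hw hr => ?_⟩
    rw [Lb_Dg_inr hw hr]
    simp only [HI, Pi.neg_apply, Pi.add_apply, Pi.mul_apply]
    ring

theorem LowerOrder.exists_Lb {m : ℕ} {Φ : ((Fin (n + 1) → ℝ) → ℝ) → (Fin (n + 1) → ℝ) → ℝ}
    (h : LowerOrder m Φ) (j : Fin n) :
    ∃ Ψ, LowerOrder (m + 1) Ψ ∧
      ∀ u p, ContDiffAt ℝ ∞ u p → rad p ≠ 0 → Lb j (Φ u) p = Ψ u p := by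
  induction h with
  | zero => exact ⟨_, .zero, fun u p _ _ => Lb_const 0⟩
  | @term c hc Y J hJ =>
    obtain ⟨c', hc', hLbc⟩ := exists_Lb_eq_of_mem_coeffAlgebra hc j
    obtain ⟨Φ, hΦ, hcomm⟩ := exists_lowerOrder_Lb_Dg j Y
    refine ⟨_, .add (.add (.term hc' Y (J := J) (by omega)) (.term hc Y (J := j :: J) (by simpa)))
      ((hΦ.comp_HI J).coeff_mul hc |>.mono (by omega)), fun u p hu hr => ?_⟩
    rw [Lb_mul (differentiableAt_of_mem_coeffAlgebra hc hr) (differentiableAt_Dg (hu.HI J) hr Y),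
      hcomm _ p (hu.HI J) hr, hLbc p hr]
    simp only [HI]
    ring
  | add hΦ hΨ ihΦ ihΨ =>
    obtain ⟨Φ', hΦ', hΦeq⟩ := ihΦ
    obtain ⟨Ψ', hΨ', hΨeq⟩ := ihΨ
    refine ⟨_, .add hΦ' hΨ', fun u p hu hr => ?_⟩
    rw [Lb_add (hΦ.differentiableAt hu hr) (hΨ.differentiableAt hu hr), hΦeq u p hu hr,
      hΨeq u p hu hr]

theorem exists_lowerOrder_HI_Dg (I : List (Fin n)) (d : Fin n ⊕ Fin (n + 1)) :
    ∃ Φ, LowerOrder I.length Φ ∧ ∀ u p, (∀ᶠ q in 𝓝 p, ContDiffAt ℝ ∞ u q) → rad p ≠ 0 →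
      HI I (Dg d u) p = Dg d (HI I u) p + Φ u p := by
  induction I with
  | nil => exact ⟨_, .zero, fun u p _ _ => by simp [HI]⟩
  | cons j I ih =>
    obtain ⟨Φ, hΦ, hexp⟩ := ih
    obtain ⟨Ψ, hΨ, hΨeq⟩ := hΦ.exists_Lb j
    obtain ⟨Χ, hΧ, hcomm⟩ := exists_lowerOrder_Lb_Dg j d
    refine ⟨_, .add ((hΧ.comp_HI I).mono (by simp [add_comm])) hΨ, fun u p hu hr => ?_⟩
    have hexp_near : HI I (Dg d u) =ᶠ[𝓝 p] fun q => Dg d (HI I u) q + Φ u q := by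
      filter_upwards [hu.eventually_nhds, continuous_rad.continuousAt.eventually_ne hr]
        with q hq hqr using hexp u q hq hqr
    have hu₀ := hu.self_of_nhds
    calc HI (j :: I) (Dg d u) p = Lb j (fun q => Dg d (HI I u) q + Φ u q) p := Lb_congr hexp_near
      _ = _ := by
        rw [Lb_add (differentiableAt_Dg (hu₀.HI I) hr d) (hΦ.differentiableAt hu₀ hr),
          hcomm _ p (hu₀.HI I) hr, hΨeq u p hu₀ hr, add_assoc]
        rfl

def lowerSum (m : ℕ) (u : (Fin (n + 1) → ℝ) → ℝ) (p : Fin (n + 1) → ℝ) : ℝ :=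
  ∑ Y : Fin n ⊕ Fin (n + 1), ∑ k ∈ range m, ∑ J : Fin k → Fin n, |Dg Y (HI (List.ofFn J) u) p|

theorem lowerSum_nonneg (m : ℕ) (u : (Fin (n + 1) → ℝ) → ℝ) (p : Fin (n + 1) → ℝ) :
    0 ≤ lowerSum m u p := by
  unfold lowerSum
  positivity

theorem abs_Dg_HI_le_lowerSum {m : ℕ} {J : List (Fin n)} (hJ : J.length < m)
    (Y : Fin n ⊕ Fin (n + 1)) (u : (Fin (n + 1) → ℝ) → ℝ) (p : Fin (n + 1) → ℝ) :
    |Dg Y (HI J u) p| ≤ lowerSum m u p := by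
  let S (Y : Fin n ⊕ Fin (n + 1)) (k : ℕ) := ∑ J : Fin k → Fin n, |Dg Y (HI (List.ofFn J) u) p|
  calc |Dg Y (HI J u) p| = |Dg Y (HI (List.ofFn J.get) u) p| := by rw [List.ofFn_get]
    _ ≤ S Y J.length := single_le_sum (f := fun J' : Fin J.length → Fin n =>
        |Dg Y (HI (List.ofFn J') u) p|) (fun _ _ => abs_nonneg _) (mem_univ _)
    _ ≤ ∑ k ∈ range m, S Y k :=
      single_le_sum (f := S Y) (fun _ _ => by positivity) (mem_range.2 hJ)
    _ ≤ lowerSum m u p :=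
      single_le_sum (f := fun Y => ∑ k ∈ range m, S Y k) (fun _ _ => by positivity) (mem_univ Y)

theorem LowerOrder.exists_abs_le {m : ℕ} {Φ : ((Fin (n + 1) → ℝ) → ℝ) → (Fin (n + 1) → ℝ) → ℝ}
    (h : LowerOrder m Φ) : ∃ C, ∀ u, ∀ p ∈ coneRegion, |Φ u p| ≤ C * lowerSum m u p := by
  induction h with
  | zero => exact ⟨0, fun u p _ => by simp⟩
  | term hc Y hJ =>
    obtain ⟨B, hB⟩ := exists_abs_le_of_mem_coeffAlgebra hc
    refine ⟨B, fun u p hp => ?_⟩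
    rw [abs_mul]
    exact mul_le_mul (hB p hp) (abs_Dg_HI_le_lowerSum hJ Y u p) (abs_nonneg _)
      ((abs_nonneg _).trans (hB p hp))
  | add _ _ hΦ hΨ =>
    obtain ⟨A, hA⟩ := hΦ
    obtain ⟨B, hB⟩ := hΨ
    exact ⟨A + B, fun u p hp => (abs_add_le _ _).trans
      ((add_le_add (hA u p hp) (hB u p hp)).trans_eq (add_mul A B _).symm)⟩

theorem eventually_abs_HI_Dg_le (I : List (Fin n)) (d : Fin n ⊕ Fin (n + 1)) :
    ∀ᶠ C in atTop, ∀ u p, (∀ᶠ q in 𝓝 p, ContDiffAt ℝ ∞ u q) → p ∈ coneRegion →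
      |HI I (Dg d u) p| ≤ |Dg d (HI I u) p| + C * lowerSum I.length u p := by
  obtain ⟨Φ, hΦ, hexp⟩ := exists_lowerOrder_HI_Dg I d
  obtain ⟨C₀, hC₀⟩ := hΦ.exists_abs_le
  filter_upwards [eventually_ge_atTop C₀] with C hC u p hu hp
  rw [hexp u p hu (rad_pos_of_mem_coneRegion hp).ne']
  calc |Dg d (HI I u) p + Φ u p| ≤ |Dg d (HI I u) p| + |Φ u p| := abs_add_le _ _
    _ ≤ |Dg d (HI I u) p| + C * lowerSum I.length u p := by
      gcongr
      exact (hC₀ u p hp).trans (mul_le_mul_of_nonneg_right hC (lowerSum_nonneg _ u p))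

theorem boost_good_derivative_commutator_estimate_general (n m : ℕ) :
    ∃ C > (0 : ℝ), ∀ d : Fin n ⊕ Fin (n + 1), ∀ I : Fin m → Fin n,
      ∀ U : Set (Fin (n + 1) → ℝ), IsOpen U →
      ∀ u : (Fin (n + 1) → ℝ) → ℝ, ContDiffOn ℝ (⊤ : ℕ∞) u U →
      ∀ p ∈ U, p 0 / 2 ≤ rad p → rad p ≤ p 0 - 1 →
        |HI (List.ofFn I) (Dg d u) p|
          ≤ |Dg d (HI (List.ofFn I) u) p|
            + C * ∑ Y : Fin n ⊕ Fin (n + 1), ∑ k ∈ Finset.range m,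
                ∑ J : Fin k → Fin n, |Dg Y (HI (List.ofFn J) u) p| := by
  obtain ⟨C, hC, hC₀⟩ := ((eventually_all.2 fun d => eventually_all.2 fun I : Fin m → Fin n =>
    eventually_abs_HI_Dg_le (List.ofFn I) d).and (eventually_gt_atTop 0)).exists
  refine ⟨C, hC₀, fun d I U hU u hu p hp h₁ h₂ => ?_⟩
  have hu_near : ∀ᶠ q in 𝓝 p, ContDiffAt ℝ ∞ u q := by
    filter_upwards [hU.mem_nhds hp] with q hq using hu.contDiffAt (hU.mem_nhds hq)
  simpa [lowerSum] using hC d I u p hu_near ⟨h₁, h₂⟩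

/-- commutator estimate between iterated boosts and the operators
of `𝒟_g`, valid in the region `t/2 ≤ r ≤ t - 1`:
`|H^I D u| ≤ |D H^I u| + C Σ_{Y ∈ 𝒟_g} Σ_{|J| < m} |Y H^J u|`. -/
theorem boost_good_derivative_commutator_estimate (n m : ℕ) (hn : 1 ≤ n) (hm : 1 ≤ m) :
    ∃ C > (0 : ℝ), ∀ d : Fin n ⊕ Fin (n + 1), ∀ I : Fin m → Fin n,
      ∀ U : Set (Fin (n + 1) → ℝ), IsOpen U →
      ∀ u : (Fin (n + 1) → ℝ) → ℝ, ContDiffOn ℝ (⊤ : ℕ∞) u U →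
      ∀ p ∈ U, p 0 / 2 ≤ rad p → rad p ≤ p 0 - 1 →
        |HI (List.ofFn I) (Dg d u) p|
          ≤ |Dg d (HI (List.ofFn I) u) p|
            + C * ∑ Y : Fin n ⊕ Fin (n + 1), ∑ k ∈ Finset.range m,
                ∑ J : Fin k → Fin n, |Dg Y (HI (List.ofFn J) u) p| :=
  boost_good_derivative_commutator_estimate_general n m
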